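/- arXiv:1503.03658 — 2 statements merged into one kernel-verified Lean document; each statement's English description precedes it below -/
import Mathlib

section
/- For the randomized Collatz chain started at any positive odd integer x, let M > 1 satisfy ln(1 + (7/3)·e^{−M}) < (1/4)·ln(128/81). Then almost surely X_n < e^M for infinitely many n; that is, P( X_n ∈ O_M infinitely often ) = 1, where O_M denotes the (finite) set of positive odd integers less than e^M. -/
/-!
Take `V m = m ^ s` for a small `s > 0` and `κ = 3 + 7 e^{-M}`. From an odd `m ≥ e^M` one step
gives `X₁ ≤ κ m / 2 ^ d`, and among `3m+1, 3m+3, 3m+5, 3m+7` two numbers have 2-adic valuation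
`1`, one has valuation `2` and one at least `3`; so `E[V(X₁)] ≤ ρ(s) V(m)` with
`ρ(s) = (2 (κ/2)^s + (κ/4)^s + (κ/8)^s) / 4`. Since `ρ(0) = 1` and
`ρ'(0) = log κ - (7/4) log 2 < 0` under the hypothesis on `M`, some `s > 0` has `ρ(s) < 1`.
By independence of the next increment from the past,
`E[V(Xₙ); X_N, …, Xₙ ≥ e^M] ≤ ρ(s)^(n-N) E[V(X_N)]`, and as `V ≥ 1` the chain stays above
`e^M` from time `N` on with probability zero.
-/

open Real MeasureTheory ProbabilityTheory Filter
open scoped ENNReal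

lemma padicValNat_two_eq_of_mod_eq {n k : ℕ} (h : n % 2 ^ (k + 1) = 2 ^ k) :
    padicValNat 2 n = k := by
  have hn : n = 2 ^ k * (2 * (n / 2 ^ (k + 1)) + 1) := by
    conv_lhs => rw [← Nat.mod_add_div n (2 ^ (k + 1)), h]
    ring
  rw [hn, padicValNat.mul (by positivity) (by omega), padicValNat.prime_pow,
    padicValNat.eq_zero_of_not_dvd (by omega), add_zero]

lemma sum_antitone_padicValNat_le {g : ℕ → ℝ} (hg : Antitone g) {m : ℕ} (hm : Odd m) :
    ∑ v ∈ ({1, 3, 5, 7} : Finset ℕ), g (padicValNat 2 (m + v)) ≤ 2 * g 1 + g 2 + g 3 := by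
  have hν₁ (n : ℕ) (h : n % 4 = 2) : padicValNat 2 n = 1 :=
    padicValNat_two_eq_of_mod_eq (by norm_num; omega)
  have hν₂ (n : ℕ) (h : n % 8 = 4) : padicValNat 2 n = 2 :=
    padicValNat_two_eq_of_mod_eq (by norm_num; omega)
  have hν₃ (n : ℕ) (h : n % 8 = 0) (hn : n ≠ 0) : g (padicValNat 2 n) ≤ g 3 :=
    hg ((padicValNat_dvd_iff_le hn).1 (by norm_num; omega))
  rw [Finset.sum_insert (by decide), Finset.sum_insert (by decide), Finset.sum_insert (by decide),
    Finset.sum_singleton]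
  obtain ⟨k, rfl⟩ := hm
  rcases (by omega : k % 4 = 0 ∨ k % 4 = 1 ∨ k % 4 = 2 ∨ k % 4 = 3) with h | h | h | h
  · rw [hν₁ (2 * k + 1 + 1) (by omega), hν₂ (2 * k + 1 + 3) (by omega),
      hν₁ (2 * k + 1 + 5) (by omega)]
    linarith [hν₃ (2 * k + 1 + 7) (by omega) (by omega)]
  · rw [hν₂ (2 * k + 1 + 1) (by omega), hν₁ (2 * k + 1 + 3) (by omega),
      hν₁ (2 * k + 1 + 7) (by omega)]
    linarith [hν₃ (2 * k + 1 + 5) (by omega) (by omega)]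
  · rw [hν₁ (2 * k + 1 + 1) (by omega), hν₁ (2 * k + 1 + 5) (by omega),
      hν₂ (2 * k + 1 + 7) (by omega)]
    linarith [hν₃ (2 * k + 1 + 3) (by omega) (by omega)]
  · rw [hν₁ (2 * k + 1 + 3) (by omega), hν₂ (2 * k + 1 + 5) (by omega),
      hν₁ (2 * k + 1 + 7) (by omega)]
    linarith [hν₃ (2 * k + 1 + 1) (by omega) (by omega)]

lemma HasDerivAt.exists_gt_lt_of_neg {f : ℝ → ℝ} {f' x : ℝ} (hf : HasDerivAt f f' x)
    (hf' : f' < 0) : ∃ y > x, f y < f x := by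
  obtain ⟨y, hslope, hy⟩ := ((hf.hasDerivWithinAt (s := Set.Ioi x)).limsup_slope_le'
    (lt_irrefl x) hf' |>.and self_mem_nhdsWithin).exists
  refine ⟨y, hy, ?_⟩
  rw [slope_def_field, div_neg_iff] at hslope
  rcases hslope with ⟨-, h⟩ | ⟨h, -⟩ <;> linarith [show x < y from hy]

section SigmaUpTo

variable {Ω β : Type*} [mβ : MeasurableSpace β]

@[reducible] def sigmaUpTo (ξ : ℕ → Ω → β) (n : ℕ) : MeasurableSpace Ω :=
  ⨆ i ≤ n, mβ.comap (ξ i)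

lemma sigmaUpTo_mono (ξ : ℕ → Ω → β) : Monotone (sigmaUpTo ξ) :=
  fun _ _ h => biSup_mono fun _ hi => hi.trans h

lemma measurable_sigmaUpTo_self (ξ : ℕ → Ω → β) (n : ℕ) : Measurable[sigmaUpTo ξ n] (ξ n) :=
  Measurable.of_comap_le (le_iSup₂ (f := fun i (_ : i ≤ n) => mβ.comap (ξ i)) n le_rfl)

variable [mΩ : MeasurableSpace Ω] {μ : Measure Ω}

lemma sigmaUpTo_le {ξ : ℕ → Ω → β} (hξ : ∀ n, Measurable (ξ n)) (n : ℕ) :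
    sigmaUpTo ξ n ≤ mΩ :=
  iSup₂_le fun i _ => (hξ i).comap_le

lemma indep_sigmaUpTo_succ {ξ : ℕ → Ω → β} (hξ : ∀ n, Measurable (ξ n)) (hind : iIndepFun ξ μ)
    (n : ℕ) : Indep (sigmaUpTo ξ n) (mβ.comap (ξ (n + 1))) μ := by
  have := indep_iSup_of_disjoint (fun i => (hξ i).comap_le) hind.iIndep
    (S := Set.Iic n) (T := {n + 1}) (by simp)
  simpa [sigmaUpTo] using this

lemma lintegral_apply_eq_sum_of_indep [MeasurableSingletonClass β] {m : MeasurableSpace Ω}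
    (hm : m ≤ mΩ) {Z : Ω → β} (hZ : Measurable[mΩ] Z) (hind : Indep m (mβ.comap Z) μ)
    {S : Finset β} (hS : ∀ ω, Z ω ∈ S) {f : Ω → β → ℝ≥0∞} (hf : ∀ v, Measurable[m] (f · v)) :
    ∫⁻ ω, f ω (Z ω) ∂μ = ∫⁻ ω, ∑ v ∈ S, μ (Z ⁻¹' {v}) * f ω v ∂μ := by
  have hsplit (ω : Ω) : f ω (Z ω) = ∑ v ∈ S, f ω v * (Z ⁻¹' {v}).indicator 1 ω := by
    rw [Finset.sum_eq_single_of_mem (Z ω) (hS ω) fun v _ hv => by simp [Ne.symm hv]]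
    simp
  have hind_meas (v : β) : Measurable[mβ.comap Z] ((Z ⁻¹' {v}).indicator (1 : Ω → ℝ≥0∞)) :=
    (measurable_one.indicator (measurableSet_singleton v)).comp (comap_measurable Z)
  have hmeas (v : β) : Measurable[mΩ] (f · v) := (hf v).mono hm le_rfl
  calc ∫⁻ ω, f ω (Z ω) ∂μ
      = ∫⁻ ω, ∑ v ∈ S, f ω v * (Z ⁻¹' {v}).indicator 1 ω ∂μ := lintegral_congr hsplit
    _ = ∑ v ∈ S, ∫⁻ ω, f ω v * (Z ⁻¹' {v}).indicator 1 ω ∂μ :=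
        lintegral_finsetSum _ fun v _ => (hmeas v).mul ((hind_meas v).mono hZ.comap_le le_rfl)
    _ = ∑ v ∈ S, μ (Z ⁻¹' {v}) * ∫⁻ ω, f ω v ∂μ := by
        refine Finset.sum_congr rfl fun v _ => ?_
        rw [lintegral_mul_eq_lintegral_mul_lintegral_of_independent_measurableSpace hm
          hZ.comap_le hind (hf v) (hind_meas v), lintegral_indicator_one
          (hZ (measurableSet_singleton v)), mul_comm]
    _ = ∫⁻ ω, ∑ v ∈ S, μ (Z ⁻¹' {v}) * f ω v ∂μ := by
        rw [lintegral_finsetSum _ fun v _ => (hmeas v).const_mul _]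
        simp_rw [lintegral_const_mul _ (hmeas _)]

end SigmaUpTo

section Chain

variable {Ω α β : Type*} {ξ : ℕ → Ω → β} {T : α → β → α} {X : ℕ → Ω → α} {a₀ : α}

lemma exists_finset_forall_mem_of_rec {S : Finset β} (hξS : ∀ n ω, ξ n ω ∈ S)
    (hX0 : ∀ ω, X 0 ω = a₀) (hX : ∀ n ω, X (n + 1) ω = T (X n ω) (ξ (n + 1) ω)) (n : ℕ) :
    ∃ F : Finset α, ∀ ω, X n ω ∈ F := by
  classical
  induction n with
  | zero => exact ⟨{a₀}, fun ω => by simp [hX0]⟩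
  | succ n ih =>
    obtain ⟨F, hF⟩ := ih
    refine ⟨(F ×ˢ S).image fun p => T p.1 p.2, fun ω => ?_⟩
    rw [hX]
    exact Finset.mem_image.2 ⟨(X n ω, ξ (n + 1) ω), Finset.mem_product.2 ⟨hF ω, hξS _ ω⟩, rfl⟩

lemma measurable_sigmaUpTo_of_rec [MeasurableSpace α] [MeasurableSingletonClass α] [Countable α]
    [MeasurableSpace β] [MeasurableSingletonClass β] [Countable β]
    (hX0 : ∀ ω, X 0 ω = a₀) (hX : ∀ n ω, X (n + 1) ω = T (X n ω) (ξ (n + 1) ω)) (n : ℕ) :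
    Measurable[sigmaUpTo ξ n] (X n) := by
  induction n with
  | zero =>
    rw [show X 0 = fun _ => a₀ from funext hX0]
    exact measurable_const
  | succ n ih =>
    rw [show X (n + 1) = fun ω => T (X n ω) (ξ (n + 1) ω) from funext (hX n)]
    exact (measurable_of_countable (Function.uncurry T)).comp
      ((ih.mono (sigmaUpTo_mono ξ n.le_succ) le_rfl).prodMk (measurable_sigmaUpTo_self ξ _))

def staysIn (X : ℕ → Ω → α) (B : Set α) (N n : ℕ) : Set Ω := ⋂ k ∈ Finset.Icc N n, X k ⁻¹' B

end Chain

section Drift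

variable {Ω α β : Type*} [MeasurableSpace Ω] {μ : Measure Ω}
  [MeasurableSpace α] [MeasurableSingletonClass α] [Countable α]
  [MeasurableSpace β] [MeasurableSingletonClass β] [Countable β]
  {ξ : ℕ → Ω → β} {T : α → β → α} {X : ℕ → Ω → α} {a₀ : α}
  {S : Finset β} {q : β → ℝ≥0∞} {B : Set α} {V : α → ℝ≥0∞} {r : ℝ≥0∞}

lemma setLIntegral_staysIn_succ_le (hξmeas : ∀ n, Measurable (ξ n)) (hind : iIndepFun ξ μ)
    (hξS : ∀ n ω, ξ n ω ∈ S) (hq : ∀ n, ∀ v ∈ S, μ (ξ (n + 1) ⁻¹' {v}) = q v)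
    (hX0 : ∀ ω, X 0 ω = a₀) (hX : ∀ n ω, X (n + 1) ω = T (X n ω) (ξ (n + 1) ω))
    (hdrift : ∀ a ∈ B, ∑ v ∈ S, q v * V (T a v) ≤ r * V a) {N n : ℕ} (hN : N ≤ n) :
    ∫⁻ ω in staysIn X B N (n + 1), V (X (n + 1) ω) ∂μ ≤
      r * ∫⁻ ω in staysIn X B N n, V (X n ω) ∂μ := by
  set A := staysIn X B N n
  have hXn := measurable_sigmaUpTo_of_rec hX0 hX n
  have hA : MeasurableSet[sigmaUpTo ξ n] A :=
    Finset.measurableSet_biInter _ fun k hk =>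
      (measurable_sigmaUpTo_of_rec hX0 hX k).mono (sigmaUpTo_mono ξ (Finset.mem_Icc.1 hk).2)
        le_rfl (Set.to_countable B).measurableSet
  have hle := sigmaUpTo_le hξmeas n
  calc ∫⁻ ω in staysIn X B N (n + 1), V (X (n + 1) ω) ∂μ
      ≤ ∫⁻ ω in A, V (T (X n ω) (ξ (n + 1) ω)) ∂μ := by
        simp_rw [hX]
        exact lintegral_mono_set (Set.biInter_subset_biInter_left fun k hk => by
          simp only [Finset.coe_Icc, Set.mem_Icc] at hk ⊢; omega)
    _ = ∫⁻ ω, A.indicator (fun ω => V (T (X n ω) (ξ (n + 1) ω))) ω ∂μ :=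
        (lintegral_indicator (hle _ hA) _).symm
    _ = ∫⁻ ω, ∑ v ∈ S, μ (ξ (n + 1) ⁻¹' {v}) * A.indicator (fun ω => V (T (X n ω) v)) ω ∂μ :=
        lintegral_apply_eq_sum_of_indep (f := fun ω v => A.indicator (V ∘ (T · v) ∘ X n) ω)
          hle (hξmeas _) (indep_sigmaUpTo_succ hξmeas hind n) (hξS _)
          fun v => ((measurable_of_countable fun a => V (T a v)).comp hXn).indicator hA
    _ ≤ ∫⁻ ω, A.indicator (fun ω => r * V (X n ω)) ω ∂μ := lintegral_mono fun ω => by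
        by_cases hω : ω ∈ A
        · simp only [Set.indicator_of_mem hω]
          rw [Finset.sum_congr rfl fun v hv => by rw [hq n v hv]]
          exact hdrift _ (Set.mem_iInter₂.1 hω n (Finset.mem_Icc.2 ⟨hN, le_rfl⟩))
        · simp [Set.indicator_of_notMem hω]
    _ = r * ∫⁻ ω in A, V (X n ω) ∂μ := by
        rw [lintegral_indicator (hle _ hA),
          lintegral_const_mul r (f := fun ω => V (X n ω))
          ((measurable_of_countable V).comp (hXn.mono hle le_rfl))]

lemma measure_forall_ge_mem_eq_zero [IsFiniteMeasure μ] (hξmeas : ∀ n, Measurable (ξ n))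
    (hind : iIndepFun ξ μ) (hξS : ∀ n ω, ξ n ω ∈ S)
    (hq : ∀ n, ∀ v ∈ S, μ (ξ (n + 1) ⁻¹' {v}) = q v)
    (hX0 : ∀ ω, X 0 ω = a₀) (hX : ∀ n ω, X (n + 1) ω = T (X n ω) (ξ (n + 1) ω))
    (hr : r < 1) (hV1 : ∀ a ∈ B, 1 ≤ V a) (hVtop : ∀ a, V a ≠ ⊤)
    (hdrift : ∀ a ∈ B, ∑ v ∈ S, q v * V (T a v) ≤ r * V a) (N : ℕ) :
    μ {ω | ∀ k ≥ N, X k ω ∈ B} = 0 := by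
  obtain ⟨F, hF⟩ := exists_finset_forall_mem_of_rec hξS hX0 hX N
  set C := (∑ a ∈ F, V a) * μ Set.univ
  have hC : C ≠ ⊤ :=
    ENNReal.mul_ne_top (ENNReal.sum_ne_top.2 fun a _ => hVtop a) (measure_ne_top μ _)
  have hmeas (n : ℕ) : Measurable fun ω => V (X n ω) :=
    (measurable_of_countable V).comp
      ((measurable_sigmaUpTo_of_rec hX0 hX n).mono (sigmaUpTo_le hξmeas n) le_rfl)
  have hdecay (m : ℕ) : ∫⁻ ω in staysIn X B N (N + m), V (X (N + m) ω) ∂μ ≤ r ^ m * C := by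
    induction m with
    | zero =>
      calc ∫⁻ ω in staysIn X B N (N + 0), V (X (N + 0) ω) ∂μ
          ≤ ∫⁻ ω, V (X N ω) ∂μ := setLIntegral_le_lintegral _ _
        _ ≤ ∫⁻ _, ∑ a ∈ F, V a ∂μ :=
          lintegral_mono fun ω => Finset.single_le_sum (fun a _ => zero_le) (hF ω)
        _ = r ^ 0 * C := by rw [lintegral_const, pow_zero, one_mul]
    | succ m ih =>
      calc ∫⁻ ω in staysIn X B N (N + m + 1), V (X (N + m + 1) ω) ∂μ
          ≤ r * ∫⁻ ω in staysIn X B N (N + m), V (X (N + m) ω) ∂μ :=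
            setLIntegral_staysIn_succ_le hξmeas hind hξS hq hX0 hX hdrift (Nat.le_add_right N m)
        _ ≤ r * (r ^ m * C) := by gcongr
        _ = r ^ (m + 1) * C := by ring
  have hbound (m : ℕ) : μ {ω | ∀ k ≥ N, X k ω ∈ B} ≤ r ^ m * C :=
    calc μ {ω | ∀ k ≥ N, X k ω ∈ B}
        ≤ μ (staysIn X B N (N + m)) :=
          measure_mono fun ω hω => Set.mem_iInter₂.2 fun k hk => hω k (Finset.mem_Icc.1 hk).1
      _ = ∫⁻ _ in staysIn X B N (N + m), 1 ∂μ := (setLIntegral_one _).symm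
      _ ≤ ∫⁻ ω in staysIn X B N (N + m), V (X (N + m) ω) ∂μ :=
          setLIntegral_mono (hmeas _) fun ω hω =>
            hV1 _ (Set.mem_iInter₂.1 hω (N + m) (Finset.mem_Icc.2 ⟨Nat.le_add_right N m, le_rfl⟩))
      _ ≤ r ^ m * C := hdecay m
  have htend : Tendsto (fun m => r ^ m * C) atTop (nhds 0) := by
    simpa using ENNReal.Tendsto.mul_const (ENNReal.tendsto_pow_atTop_nhds_zero_of_lt_one hr)
      (Or.inr hC)
  exact nonpos_iff_eq_zero.1 (ge_of_tendsto' htend hbound)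

theorem ae_frequently_notMem_of_drift [IsFiniteMeasure μ] (hξmeas : ∀ n, Measurable (ξ n))
    (hind : iIndepFun ξ μ) (hξS : ∀ n ω, ξ n ω ∈ S)
    (hq : ∀ n, ∀ v ∈ S, μ (ξ (n + 1) ⁻¹' {v}) = q v)
    (hX0 : ∀ ω, X 0 ω = a₀) (hX : ∀ n ω, X (n + 1) ω = T (X n ω) (ξ (n + 1) ω))
    (hr : r < 1) (hV1 : ∀ a ∈ B, 1 ≤ V a) (hVtop : ∀ a, V a ≠ ⊤)
    (hdrift : ∀ a ∈ B, ∑ v ∈ S, q v * V (T a v) ≤ r * V a) :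
    ∀ᵐ ω ∂μ, ∃ᶠ n in atTop, X n ω ∉ B := by
  have hnull := ae_all_iff.2 fun N => measure_eq_zero_iff_ae_notMem.1
    (measure_forall_ge_mem_eq_zero hξmeas hind hξS hq hX0 hX hr hV1 hVtop hdrift N)
  filter_upwards [hnull] with ω hω
  exact frequently_atTop.2 fun N => by simpa using hω N

end Drift

def collatzStep (m v : ℕ) : ℕ := (3 * m + v) / 2 ^ padicValNat 2 (3 * m + v)

lemma odd_collatzStep {m v : ℕ} (hv : v ≠ 0) : Odd (collatzStep m v) := by
  have h := Nat.not_dvd_ordCompl Nat.prime_two (n := 3 * m + v) (by omega)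
  rw [Nat.factorization_def _ Nat.prime_two] at h
  exact Nat.odd_iff.2 (by unfold collatzStep; omega)

lemma cast_collatzStep (m v : ℕ) :
    (collatzStep m v : ℝ) = (3 * m + v) / 2 ^ padicValNat 2 (3 * m + v) := by
  rw [collatzStep, Nat.cast_div pow_padicValNat_dvd (by positivity)]
  push_cast
  rfl

lemma collatzStep_rpow_le {M s : ℝ} (hs : 0 ≤ s) {m v : ℕ} (hv : v ≤ 7) (hm : exp M ≤ m) :
    (collatzStep m v : ℝ) ^ s ≤
      ((3 + 7 * exp (-M)) / 2 ^ padicValNat 2 (3 * m + v)) ^ s * m ^ s := by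
  have hlin : (3 * m + v : ℝ) ≤ (3 + 7 * exp (-M)) * m := by
    have : 1 ≤ exp (-M) * m := by
      calc (1 : ℝ) = exp (-M) * exp M := by rw [← exp_add, neg_add_cancel, exp_zero]
        _ ≤ exp (-M) * m := by gcongr
    have : (v : ℝ) ≤ 7 := by exact_mod_cast hv
    nlinarith
  rw [← mul_rpow (by positivity) (by positivity), cast_collatzStep]
  gcongr
  rw [div_mul_eq_mul_div]
  gcongr

noncomputable def collatzRate (κ s : ℝ) : ℝ := (2 * (κ / 2) ^ s + (κ / 4) ^ s + (κ / 8) ^ s) / 4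

lemma sum_collatzStep_rpow_le {M s : ℝ} (hs : 0 ≤ s) {m : ℕ} (hm : Odd m) (hM : exp M ≤ m) :
    ∑ v ∈ ({1, 3, 5, 7} : Finset ℕ), (collatzStep m v : ℝ) ^ s ≤
      4 * collatzRate (3 + 7 * exp (-M)) s * m ^ s := by
  set κ := 3 + 7 * exp (-M)
  have hg : Antitone fun d : ℕ => (κ / 2 ^ d) ^ s := fun a b hab => by
    dsimp only
    gcongr
    · exact one_le_two
  calc ∑ v ∈ ({1, 3, 5, 7} : Finset ℕ), (collatzStep m v : ℝ) ^ s
      ≤ ∑ v ∈ ({1, 3, 5, 7} : Finset ℕ), (κ / 2 ^ padicValNat 2 (3 * m + v)) ^ s * m ^ s :=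
        Finset.sum_le_sum fun v hv => collatzStep_rpow_le hs (by simp at hv; omega) hM
    _ = (∑ v ∈ ({1, 3, 5, 7} : Finset ℕ), (κ / 2 ^ padicValNat 2 (3 * m + v)) ^ s) * m ^ s :=
        (Finset.sum_mul ..).symm
    _ ≤ (2 * (κ / 2 ^ 1) ^ s + (κ / 2 ^ 2) ^ s + (κ / 2 ^ 3) ^ s) * m ^ s := by
        gcongr
        exact sum_antitone_padicValNat_le hg ((by decide : Odd 3).mul hm)
    _ = 4 * collatzRate κ s * m ^ s := by
        rw [collatzRate, mul_div_cancel₀ _ four_ne_zero]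
        norm_num

lemma hasDerivAt_collatzRate {κ : ℝ} (hκ : 0 < κ) :
    HasDerivAt (collatzRate κ) ((2 * log (κ / 2) + log (κ / 4) + log (κ / 8)) / 4) 0 := by
  have hpow (c : ℝ) (hc : 0 < c) : HasDerivAt (fun s : ℝ => c ^ s) (log c) 0 := by
    simpa using (hasStrictDerivAt_const_rpow hc 0).hasDerivAt
  exact ((((hpow _ (by positivity)).const_mul 2).add (hpow _ (by positivity))).add
    (hpow _ (by positivity))).div_const 4

lemma exists_collatzRate_lt_one {κ : ℝ} (hκ : 0 < κ) (h : log κ < 7 / 4 * log 2) :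
    ∃ s > 0, collatzRate κ s < 1 := by
  have hderiv : (2 * log (κ / 2) + log (κ / 4) + log (κ / 8)) / 4 = log κ - 7 / 4 * log 2 := by
    rw [log_div hκ.ne' (by norm_num), log_div hκ.ne' (by norm_num), log_div hκ.ne' (by norm_num),
      show (4 : ℝ) = 2 ^ 2 by norm_num, show (8 : ℝ) = 2 ^ 3 by norm_num, log_pow, log_pow]
    push_cast
    ring
  have h0 : collatzRate κ 0 = 1 := by norm_num [collatzRate]
  simpa [h0] using (hasDerivAt_collatzRate hκ).exists_gt_lt_of_neg (by linarith)

lemma sum_ofReal_collatzStep_rpow_le {M s : ℝ} (hs : 0 ≤ s) {m : ℕ} (hm : Odd m)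
    (hM : exp M ≤ m) :
    ∑ v ∈ ({1, 3, 5, 7} : Finset ℕ), 1 / 4 * ENNReal.ofReal ((collatzStep m v : ℝ) ^ s) ≤
      ENNReal.ofReal (collatzRate (3 + 7 * exp (-M)) s) * ENNReal.ofReal ((m : ℝ) ^ s) := by
  have hquarter : (1 / 4 : ℝ≥0∞) = ENNReal.ofReal (1 / 4) := by
    rw [ENNReal.ofReal_div_of_pos four_pos]; simp
  rw [← Finset.mul_sum, ← ENNReal.ofReal_sum_of_nonneg fun v _ => by positivity,
    ← ENNReal.ofReal_mul (by unfold collatzRate; positivity), hquarter,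
    ← ENNReal.ofReal_mul (by norm_num)]
  exact ENNReal.ofReal_le_ofReal (by linarith [sum_collatzStep_rpow_le hs hm hM])

theorem stmt_12_general
    {Ω : Type*} [MeasurableSpace Ω] (μ : MeasureTheory.Measure Ω)
    [MeasureTheory.IsProbabilityMeasure μ]
    (ξ : ℕ → Ω → ℕ)
    (hξval : ∀ n ω, ξ n ω = 1 ∨ ξ n ω = 3 ∨ ξ n ω = 5 ∨ ξ n ω = 7)
    (hξmeas : ∀ n, Measurable (ξ n))
    (hξindep : ProbabilityTheory.iIndepFun ξ μ)
    (hξdist : ∀ n, μ {ω | ξ n ω = 1} = 1/4 ∧ μ {ω | ξ n ω = 3} = 1/4 ∧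
      μ {ω | ξ n ω = 5} = 1/4 ∧ μ {ω | ξ n ω = 7} = 1/4)
    (x : ℕ) (hx : Odd x)
    (X : ℕ → Ω → ℕ)
    (hX0 : ∀ ω, X 0 ω = x)
    (hXrec : ∀ n ω, X (n + 1) ω =
      (3 * X n ω + ξ (n + 1) ω) / 2 ^ padicValNat 2 (3 * X n ω + ξ (n + 1) ω))
    (M : ℝ)
    (hM' : Real.log (1 + (7 / 3) * Real.exp (-M)) < (1 / 4) * Real.log (128 / 81)) :
    ∀ᵐ ω ∂μ, ∃ᶠ n in Filter.atTop, (X n ω : ℝ) < Real.exp M := by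
  have hκ : log (3 + 7 * exp (-M)) < 7 / 4 * log 2 := by
    rw [show 3 + 7 * exp (-M) = 3 * (1 + 7 / 3 * exp (-M)) by ring,
      log_mul (by norm_num) (by positivity)]
    rw [show (128 / 81 : ℝ) = 2 ^ 7 / 3 ^ 4 by norm_num, log_div (by norm_num) (by norm_num),
      log_pow, log_pow] at hM'
    push_cast at hM'
    linarith
  obtain ⟨s, hs, hρ⟩ := exists_collatzRate_lt_one (by positivity) hκ
  have hodd (n : ℕ) (ω : Ω) : Odd (X n ω) := by
    induction n with
    | zero => rw [hX0]; exact hx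
    | succ n _ =>
      rw [hXrec]
      exact odd_collatzStep (by rcases hξval (n + 1) ω with h | h | h | h <;> omega)
  have hq (n : ℕ) : ∀ v ∈ ({1, 3, 5, 7} : Finset ℕ), μ (ξ (n + 1) ⁻¹' {v}) = 1 / 4 := by
    obtain ⟨h1, h3, h5, h7⟩ := hξdist (n + 1)
    simp only [Finset.mem_insert, Finset.mem_singleton]
    rintro v (rfl | rfl | rfl | rfl) <;> assumption
  -- The drift bound fails at even `m`, so oddness is part of `B`; the chain never leaves it.
  have hfreq := ae_frequently_notMem_of_drift (T := collatzStep) (B := {m | Odd m ∧ exp M ≤ m})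
    (V := fun m => ENNReal.ofReal ((m : ℝ) ^ s)) hξmeas hξindep (by simpa using hξval) hq hX0
    hXrec (ENNReal.ofReal_lt_one.2 hρ)
    (fun m hm => ENNReal.one_le_ofReal.2 (one_le_rpow (by exact_mod_cast hm.1.pos) hs.le))
    (fun _ => ENNReal.ofReal_ne_top) fun m hm => sum_ofReal_collatzStep_rpow_le hs.le hm.1 hm.2
  filter_upwards [hfreq] with ω hω
  exact hω.mono fun n hn => lt_of_not_ge fun h => hn ⟨hodd n ω, h⟩

/-- For the randomized Collatz chain started at a positive odd integer `x`, with `M > 1`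
such that `ln (1 + (7/3) e^{-M}) < (1/4) ln (128/81)`, almost surely `Xₙ < e^M` for
infinitely many `n`. -/
theorem stmt_12
    {Ω : Type*} [MeasurableSpace Ω] (μ : MeasureTheory.Measure Ω)
    [MeasureTheory.IsProbabilityMeasure μ]
    (ξ : ℕ → Ω → ℕ)
    (hξval : ∀ n ω, ξ n ω = 1 ∨ ξ n ω = 3 ∨ ξ n ω = 5 ∨ ξ n ω = 7)
    (hξmeas : ∀ n, Measurable (ξ n))
    (hξindep : ProbabilityTheory.iIndepFun ξ μ)
    (hξdist : ∀ n, μ {ω | ξ n ω = 1} = 1/4 ∧ μ {ω | ξ n ω = 3} = 1/4 ∧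
      μ {ω | ξ n ω = 5} = 1/4 ∧ μ {ω | ξ n ω = 7} = 1/4)
    (x : ℕ) (hx : Odd x) (hxpos : 0 < x)
    (X : ℕ → Ω → ℕ)
    (hX0 : ∀ ω, X 0 ω = x)
    (hXrec : ∀ n ω, X (n + 1) ω =
      (3 * X n ω + ξ (n + 1) ω) / 2 ^ padicValNat 2 (3 * X n ω + ξ (n + 1) ω))
    (d : ℕ → Ω → ℕ)
    (hd : ∀ n ω, d (n + 1) ω = padicValNat 2 (3 * X n ω + ξ (n + 1) ω))
    (M : ℝ) (hM : 1 < M)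
    (hM' : Real.log (1 + (7 / 3) * Real.exp (-M)) < (1 / 4) * Real.log (128 / 81)) :
    ∀ᵐ ω ∂μ, ∃ᶠ n in Filter.atTop, (X n ω : ℝ) < Real.exp M :=
  stmt_12_general μ ξ hξval hξmeas hξindep hξdist x hx X hX0 hXrec M hM'
end

section
/- (Proposition 2, positive recurrence of state 1) For the randomized Collatz chain started at X_0 = 1, the first return time T := inf{ n ≥ 1 : X_n = 1 } satisfies E[T] < ∞; in particular T < ∞ almost surely. -/
/-!
Put `ℓ(y) = 20 log₂ y + e(y)`, with a correction `e` supported on `{3, 7, 11, 13, 17}`. Every odd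
`x ≠ 1` satisfies Foster's drift condition `E[ℓ(X₁) | X₀ = x] ≤ ℓ(x) - 1`: for large `x` because the
four numbers `3x + ξ` are divisible by `2, 2, 4, 8` in some order, so that the successors have
product at most `(3x + 7)⁴ / 2⁷ < 2^(-1/5) x⁴`; the finitely many remaining states are checked by
computation. Hence `aₙ = E[ℓ(Xₙ); T > n]` satisfies `aₙ₊₁ + P(T > n + 1) ≤ aₙ` for `n ≥ 1`, and
`E T = ∑ₙ P(T > n) ≤ 2 + E ℓ(X₁) < ∞`.
-/

open MeasureTheory ProbabilityTheory
open scoped ENNReal NNReal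

lemma ENat.toENNReal_eq_tsum_ite (t : ℕ∞) :
    (t : ℝ≥0∞) = ∑' n : ℕ, if (n : ℕ∞) < t then 1 else 0 := by
  induction t using ENat.recTopCoe with
  | top => simp
  | coe m =>
    rw [tsum_eq_sum (s := Finset.range m) fun n hn => by simpa using hn]
    simp [Finset.sum_ite_of_true fun n hn => Finset.mem_range.1 hn]

lemma ENNReal.tsum_le_of_succ_add_le {a b : ℕ → ℝ≥0∞} (h : ∀ n, a (n + 1) + b n ≤ a n) :
    ∑' n, b n ≤ a 0 := by
  have hpartial (N : ℕ) : ∑ n ∈ Finset.range N, b n + a N ≤ a 0 := by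
    induction N with
    | zero => simp
    | succ N ih =>
      calc ∑ n ∈ Finset.range (N + 1), b n + a (N + 1)
          = ∑ n ∈ Finset.range N, b n + (a (N + 1) + b N) := by rw [Finset.sum_range_succ]; ring
        _ ≤ a 0 := (add_le_add le_rfl (h N)).trans ih
  exact ENNReal.tsum_le_of_sum_range_le fun N => le_self_add.trans (hpartial N)

lemma Real.add_sum_logb_le_of_two_pow_mul_prod_le {ι : Type*} (s : Finset ι) {a : ι → ℝ} {b : ℝ}
    (ha : ∀ i ∈ s, 0 < a i) (m n : ℕ) (h : 2 ^ m * ∏ i ∈ s, a i ≤ b ^ n) :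
    m + ∑ i ∈ s, Real.logb 2 (a i) ≤ n * Real.logb 2 b := by
  have hprod : 0 < ∏ i ∈ s, a i := Finset.prod_pos ha
  have := Real.logb_le_logb_of_le one_lt_two (by positivity) h
  rwa [Real.logb_mul (by positivity) hprod.ne', Real.logb_pow, Real.logb_self_eq_one one_lt_two,
    mul_one, Real.logb_prod _ _ fun i hi => (ha i hi).ne', Real.logb_pow] at this

namespace MeasureTheory

variable {α β : Type*} [MeasurableSpace α] {μ : Measure α} [MeasurableSpace β] [Countable β]
  [MeasurableSingletonClass β]

lemma setLIntegral_eq_tsum_inter_preimage {A : Set α} (hA : MeasurableSet A) {Y : α → β}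
    (hY : Measurable Y) (f : α → ℝ≥0∞) :
    ∫⁻ a in A, f a ∂μ = ∑' y, ∫⁻ a in A ∩ Y ⁻¹' {y}, f a ∂μ := by
  rw [← lintegral_iUnion (fun y => hA.inter (hY (measurableSet_singleton y))), ← Set.inter_iUnion,
    ← Set.preimage_iUnion, Set.iUnion_of_singleton, Set.preimage_univ, Set.inter_univ]
  intro y y' hne
  exact (Set.disjoint_singleton.2 hne |>.preimage Y).mono Set.inter_subset_right Set.inter_subset_right

lemma lintegral_comp_eq_sum {ζ : α → β} (hζ : Measurable ζ) {s : Finset β} (hs : ∀ a, ζ a ∈ s)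
    (g : β → ℝ≥0∞) : ∫⁻ a, g (ζ a) ∂μ = ∑ y ∈ s, g y * μ (ζ ⁻¹' {y}) := by
  rw [← lintegral_map (measurable_of_countable g) hζ, lintegral_countable', tsum_eq_sum (s := s)]
  · simp only [Measure.map_apply hζ (measurableSet_singleton _)]
  · intro y hy
    rw [Measure.map_apply hζ (measurableSet_singleton y),
      Set.preimage_singleton_eq_empty.2 fun ⟨a, ha⟩ => hy (ha ▸ hs a), measure_empty, mul_zero]

end MeasureTheory

namespace ProbabilityTheory

variable {Ω ι β : Type*} [MeasurableSpace Ω] {μ : Measure Ω} [MeasurableSpace β] [Countable β]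
  [MeasurableSingletonClass β] {ξ : ι → Ω → β}

lemma iIndepFun.setLIntegral_comp_eq_mul (hξ : iIndepFun ξ μ) (hmeas : ∀ i, Measurable (ξ i))
    {S : Finset ι} {k : ι} (hk : k ∉ S) {B : Set Ω}
    (hB : ∀ ω ω', (∀ i ∈ S, ξ i ω = ξ i ω') → ω ∈ B → ω' ∈ B) (g : β → ℝ≥0∞) :
    ∫⁻ ω in B, g (ξ k ω) ∂μ = μ B * ∫⁻ ω, g (ξ k ω) ∂μ := by
  classical
  let past : Ω → S → β := fun ω i => ξ i ω
  have hB_eq : B = past ⁻¹' (past '' B) := by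
    refine (Set.subset_preimage_image past B).antisymm ?_
    rintro ω ⟨ω', hω', hpast⟩
    exact hB ω' ω (fun i hi => congrFun hpast ⟨i, hi⟩) hω'
  have hBmeas : MeasurableSet B := by
    rw [hB_eq]; exact (measurable_pi_lambda past fun i => hmeas i) .of_discrete
  have hind : IndepFun (B.indicator (1 : Ω → ℝ≥0∞)) (fun ω => g (ξ k ω)) μ := by
    have := (hξ.indepFun_finset S {k} (Finset.disjoint_singleton_right.2 hk) hmeas).comp
      (measurable_of_countable ((past '' B).indicator (1 : (S → β) → ℝ≥0∞)))
      (measurable_of_countable fun u : ({k} : Finset ι) → β => g (u ⟨k, Finset.mem_singleton_self k⟩))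
    rwa [hB_eq]
  rw [← lintegral_indicator hBmeas, ← lintegral_indicator_one hBmeas,
    ← lintegral_mul_eq_lintegral_mul_lintegral_of_indepFun (g := fun ω => g (ξ k ω))
      (measurable_one.indicator hBmeas) ((measurable_of_countable g).comp (hmeas k)) hind]
  congr with ω
  by_cases hω : ω ∈ B <;> simp [hω]

end ProbabilityTheory

namespace RandomCollatz

def collatzStep (x j : ℕ) : ℕ := (3 * x + j) / 2 ^ padicValNat 2 (3 * x + j)

lemma collatzStep_mul_two_pow (x j : ℕ) :
    collatzStep x j * 2 ^ padicValNat 2 (3 * x + j) = 3 * x + j :=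
  Nat.div_mul_cancel pow_padicValNat_dvd

lemma odd_collatzStep {x j : ℕ} (h : 3 * x + j ≠ 0) : Odd (collatzStep x j) := by
  rw [Nat.odd_iff, ← Nat.two_dvd_ne_zero]
  rintro ⟨c, hc⟩
  have hmul := collatzStep_mul_two_pow x j
  rw [hc] at hmul
  exact pow_succ_padicValNat_not_dvd (p := 2) h ⟨c, by rw [pow_succ]; linarith⟩

lemma collatzStep_mul_two_pow_le {x j a : ℕ} (h : 2 ^ a ∣ 3 * x + j) :
    collatzStep x j * 2 ^ a ≤ 3 * x + j := by
  rcases eq_or_ne (3 * x + j) 0 with h0 | h0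
  · simp [collatzStep, h0]
  calc collatzStep x j * 2 ^ a ≤ collatzStep x j * 2 ^ padicValNat 2 (3 * x + j) :=
        Nat.mul_le_mul_left _ (Nat.pow_le_pow_right two_pos ((padicValNat_dvd_iff_le h0).1 h))
    _ = 3 * x + j := collatzStep_mul_two_pow x j

-- chosen so that the drift condition holds at every odd `x < 49`, while `collatzWeight y ≤ 19 ^ 20`
-- for `y < 19`
def lyapunovCorrection : ℕ → ℕ
  | 3 => 7 | 7 => 7 | 11 => 2 | 13 => 1 | 17 => 2 | _ => 0

def collatzWeight (y : ℕ) : ℕ := 2 ^ lyapunovCorrection y * y ^ 20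

lemma lyapunovCorrection_eq_zero {y : ℕ} (hy : 18 ≤ y) : lyapunovCorrection y = 0 := by
  unfold lyapunovCorrection; split <;> omega

lemma collatzWeight_pos {y : ℕ} (hy : 0 < y) : 0 < collatzWeight y := by
  unfold collatzWeight; positivity

lemma collatzWeight_le_max_pow (y : ℕ) : collatzWeight y ≤ max y 19 ^ 20 := by
  rcases lt_or_ge y 19 with hy | hy
  · rw [max_eq_right hy.le]
    revert y; decide
  · rw [max_eq_left hy, collatzWeight, lyapunovCorrection_eq_zero (by omega), pow_zero, one_mul]

lemma max_collatzStep_mul_two_pow_le {x j a : ℕ} (hx : 49 ≤ x) (hj : j ≤ 7) (ha : a ≤ 3)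
    (h : 2 ^ a ∣ 3 * x + j) : max (collatzStep x j) 19 * 2 ^ a ≤ 3 * x + 7 := by
  rcases le_total (collatzStep x j) 19 with hs | hs
  · rw [max_eq_right hs]
    calc 19 * 2 ^ a ≤ 19 * 2 ^ 3 := Nat.mul_le_mul_left _ (Nat.pow_le_pow_right two_pos ha)
      _ ≤ 3 * x + 7 := by omega
  · rw [max_eq_left hs]
    exact (collatzStep_mul_two_pow_le h).trans (by omega)

lemma two_pow_seven_mul_prod_max_collatzStep_le {x : ℕ} (hx : Odd x) (hx49 : 49 ≤ x) :
    2 ^ 7 * (max (collatzStep x 1) 19 * max (collatzStep x 3) 19 *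
      max (collatzStep x 5) 19 * max (collatzStep x 7) 19) ≤ (3 * x + 7) ^ 4 := by
  suffices ∀ a₁ a₃ a₅ a₇, a₁ + a₃ + a₅ + a₇ = 7 → a₁ ≤ 3 ∧ a₃ ≤ 3 ∧ a₅ ≤ 3 ∧ a₇ ≤ 3 →
      2 ^ a₁ ∣ 3 * x + 1 ∧ 2 ^ a₃ ∣ 3 * x + 3 ∧ 2 ^ a₅ ∣ 3 * x + 5 ∧ 2 ^ a₇ ∣ 3 * x + 7 →
      2 ^ 7 * (max (collatzStep x 1) 19 * max (collatzStep x 3) 19 *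
        max (collatzStep x 5) 19 * max (collatzStep x 7) 19) ≤ (3 * x + 7) ^ 4 by
    -- the four numbers `3x + j` run through the even residues modulo 8
    have : x % 8 = 1 ∨ x % 8 = 3 ∨ x % 8 = 5 ∨ x % 8 = 7 := by
      obtain ⟨k, rfl⟩ := hx; omega
    rcases this with h | h | h | h
    exacts [this 2 1 3 1 rfl (by decide) (by norm_num; omega),
      this 1 2 1 3 rfl (by decide) (by norm_num; omega),
      this 3 1 2 1 rfl (by decide) (by norm_num; omega),
      this 1 3 1 2 rfl (by decide) (by norm_num; omega)]
  rintro a₁ a₃ a₅ a₇ hsum ⟨h₁, h₃, h₅, h₇⟩ ⟨d₁, d₃, d₅, d₇⟩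
  have bound {j a : ℕ} (hj : j ≤ 7) (ha : a ≤ 3) (h : 2 ^ a ∣ 3 * x + j) :=
    max_collatzStep_mul_two_pow_le hx49 hj ha h
  calc 2 ^ 7 * (max (collatzStep x 1) 19 * max (collatzStep x 3) 19 *
        max (collatzStep x 5) 19 * max (collatzStep x 7) 19)
      = (max (collatzStep x 1) 19 * 2 ^ a₁) * (max (collatzStep x 3) 19 * 2 ^ a₃) *
        (max (collatzStep x 5) 19 * 2 ^ a₅) * (max (collatzStep x 7) 19 * 2 ^ a₇) := by
        rw [← hsum]; ring
    _ ≤ (3 * x + 7) * (3 * x + 7) * (3 * x + 7) * (3 * x + 7) :=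
        Nat.mul_le_mul (Nat.mul_le_mul (Nat.mul_le_mul (bound (by norm_num) h₁ d₁)
          (bound (by norm_num) h₃ d₃)) (bound (by norm_num) h₅ d₅)) (bound (by norm_num) h₇ d₇)
    _ = (3 * x + 7) ^ 4 := by ring

lemma collatzWeight_drift_of_ge {x : ℕ} (hx : Odd x) (hx49 : 49 ≤ x) :
    2 ^ 4 * (collatzWeight (collatzStep x 1) * collatzWeight (collatzStep x 3) *
      collatzWeight (collatzStep x 5) * collatzWeight (collatzStep x 7)) ≤ collatzWeight x ^ 4 := by
  set P := max (collatzStep x 1) 19 * max (collatzStep x 3) 19 *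
    max (collatzStep x 5) 19 * max (collatzStep x 7) 19
  have hW : collatzWeight (collatzStep x 1) * collatzWeight (collatzStep x 3) *
      collatzWeight (collatzStep x 5) * collatzWeight (collatzStep x 7) ≤ P ^ 20 := by
    simp only [P, mul_pow]
    gcongr <;> exact collatzWeight_le_max_pow _
  have hP : 2 ^ 140 * P ^ 20 ≤ (3 * x + 7) ^ 80 := by
    have := Nat.pow_le_pow_left (two_pow_seven_mul_prod_max_collatzStep_le hx hx49) 20
    rwa [mul_pow, ← pow_mul, ← pow_mul] at this
  have hlin : 7 ^ 80 * (3 * x + 7) ^ 80 ≤ 22 ^ 80 * x ^ 80 := by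
    rw [← mul_pow, ← mul_pow]; exact Nat.pow_le_pow_left (by omega) 80
  have hWx : collatzWeight x ^ 4 = x ^ 80 := by
    rw [collatzWeight, lyapunovCorrection_eq_zero (by omega), pow_zero, one_mul, ← pow_mul]
  rw [hWx]
  refine Nat.le_of_mul_le_mul_left ?_ (by positivity : 0 < 2 ^ 140 * 7 ^ 80)
  calc 2 ^ 140 * 7 ^ 80 * (2 ^ 4 * _) ≤ 2 ^ 140 * 7 ^ 80 * (2 ^ 4 * P ^ 20) :=
        Nat.mul_le_mul_left _ (Nat.mul_le_mul_left _ hW)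
    _ = 2 ^ 4 * 7 ^ 80 * (2 ^ 140 * P ^ 20) := by ring
    _ ≤ 2 ^ 4 * 7 ^ 80 * (3 * x + 7) ^ 80 := Nat.mul_le_mul_left _ hP
    _ ≤ 2 ^ 4 * 22 ^ 80 * x ^ 80 := by
        rw [mul_assoc, mul_assoc]; exact Nat.mul_le_mul_left _ hlin
    _ ≤ 2 ^ 140 * 7 ^ 80 * x ^ 80 := Nat.mul_le_mul_right _ (by norm_num)

-- `padicValNat` is defined by well-founded recursion, which only the kernel evaluates
lemma collatzWeight_drift_of_lt : ∀ x < 49, Odd x → x ≠ 1 →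
    2 ^ 4 * (collatzWeight (collatzStep x 1) * collatzWeight (collatzStep x 3) *
      collatzWeight (collatzStep x 5) * collatzWeight (collatzStep x 7)) ≤ collatzWeight x ^ 4 := by
  decide +kernel

lemma collatzWeight_drift {x : ℕ} (hx : Odd x) (hx1 : x ≠ 1) :
    2 ^ 4 * ∏ j ∈ {1, 3, 5, 7}, collatzWeight (collatzStep x j) ≤ collatzWeight x ^ 4 := by
  simp only [Finset.mem_insert, OfNat.one_ne_ofNat, Finset.mem_singleton, or_self,
    not_false_eq_true, Finset.prod_insert, Nat.reduceEqDiff, Finset.prod_singleton]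
  rcases le_or_gt 49 x with hx49 | hx49
  · simpa only [mul_assoc] using collatzWeight_drift_of_ge hx hx49
  · simpa only [mul_assoc] using collatzWeight_drift_of_lt x hx49 hx hx1

lemma logb_collatzWeight_nonneg (y : ℕ) : 0 ≤ Real.logb 2 (collatzWeight y) :=
  div_nonneg (Real.log_natCast_nonneg _) (Real.log_nonneg one_le_two)

/-- `lyapunov y = 20 log₂ y + lyapunovCorrection y`. -/
noncomputable def lyapunov (y : ℕ) : ℝ≥0 :=
  ⟨Real.logb 2 (collatzWeight y), logb_collatzWeight_nonneg y⟩

lemma coe_lyapunov (y : ℕ) : (lyapunov y : ℝ) = Real.logb 2 (collatzWeight y) := rfl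

lemma lyapunov_drift {x : ℕ} (hx : Odd x) (hx1 : x ≠ 1) :
    ∑ j ∈ {1, 3, 5, 7}, (lyapunov (collatzStep x j) + 1) ≤ 4 * lyapunov x := by
  have h := Real.add_sum_logb_le_of_two_pow_mul_prod_le {1, 3, 5, 7}
    (a := fun j => (collatzWeight (collatzStep x j) : ℝ)) (b := collatzWeight x)
    (fun j _ => Nat.cast_pos.2 <| collatzWeight_pos (odd_collatzStep (by have := hx.pos; omega)).pos)
    4 4 (by exact_mod_cast collatzWeight_drift hx hx1)
  rw [← NNReal.coe_le_coe]
  push_cast [Finset.sum_add_distrib, coe_lyapunov]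
  norm_num at h ⊢
  linarith

structure IsChain {Ω : Type*} [MeasurableSpace Ω] (μ : Measure Ω) (ξ X : ℕ → Ω → ℕ) : Prop where
  val : ∀ n ω, ξ n ω = 1 ∨ ξ n ω = 3 ∨ ξ n ω = 5 ∨ ξ n ω = 7
  measurable : ∀ n, Measurable (ξ n)
  indep : iIndepFun ξ μ
  dist : ∀ n, μ {ω | ξ n ω = 1} = 1/4 ∧ μ {ω | ξ n ω = 3} = 1/4 ∧
    μ {ω | ξ n ω = 5} = 1/4 ∧ μ {ω | ξ n ω = 7} = 1/4
  zero : ∀ ω, X 0 ω = 1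
  succ : ∀ n ω, X (n + 1) ω = collatzStep (X n ω) (ξ (n + 1) ω)

def noReturnUpTo {Ω : Type*} (X : ℕ → Ω → ℕ) (n : ℕ) : Set Ω :=
  {ω | ∀ k, 1 ≤ k → k ≤ n → X k ω ≠ 1}

noncomputable def returnTime {Ω : Type*} (X : ℕ → Ω → ℕ) (ω : Ω) : ℕ∞ :=
  ⨅ (n : ℕ) (_ : 1 ≤ n) (_ : X n ω = 1), (n : ℕ∞)

lemma natCast_lt_returnTime_iff {Ω : Type*} {X : ℕ → Ω → ℕ} {n : ℕ} {ω : Ω} :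
    (n : ℕ∞) < returnTime X ω ↔ ω ∈ noReturnUpTo X n := by
  rw [returnTime, ← ENat.add_one_le_iff (ENat.natCast_ne_top n)]
  simp only [le_iInf_iff, noReturnUpTo, Set.mem_ofPred_eq]
  constructor
  · intro hle k hk1 hkn hk
    have := hle k hk1 hk
    norm_cast at this
    omega
  · intro hne k hk1 hk
    by_contra hlt
    exact hne k hk1 (by norm_cast at hlt; omega) hk

lemma returnTime_eq_tsum_indicator {Ω : Type*} (X : ℕ → Ω → ℕ) (ω : Ω) :
    (returnTime X ω : ℝ≥0∞) = ∑' n, (noReturnUpTo X n).indicator 1 ω := by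
  classical
  rw [ENat.toENNReal_eq_tsum_ite]
  congr with n
  rw [Set.indicator_apply]
  exact if_congr natCast_lt_returnTime_iff rfl rfl

namespace IsChain

variable {Ω : Type*} [MeasurableSpace Ω] {μ : Measure Ω} {ξ X : ℕ → Ω → ℕ}

lemma lintegral_comp_eq (h : IsChain μ ξ X) (n : ℕ) (g : ℕ → ℝ≥0∞) :
    ∫⁻ ω, g (ξ n ω) ∂μ = (∑ j ∈ {1, 3, 5, 7}, g j) / 4 := by
  rw [lintegral_comp_eq_sum (h.measurable n) (s := {1, 3, 5, 7}) (by simpa using h.val n),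
    div_eq_mul_inv, Finset.sum_mul]
  obtain ⟨d₁, d₃, d₅, d₇⟩ := h.dist n
  refine Finset.sum_congr rfl fun j hj => ?_
  simp only [Finset.mem_insert, Finset.mem_singleton] at hj
  rcases hj with rfl | rfl | rfl | rfl <;> simp [Set.preimage, *]

lemma measurable_X (h : IsChain μ ξ X) (n : ℕ) : Measurable (X n) := by
  induction n with
  | zero => simp only [funext h.zero, measurable_const]
  | succ n ih =>
    rw [funext (h.succ n)]
    exact (measurable_of_countable fun p : ℕ × ℕ => collatzStep p.1 p.2).comp
      (ih.prodMk (h.measurable (n + 1)))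

lemma X_eq_of_forall_le (h : IsChain μ ξ X) {n : ℕ} {ω ω' : Ω}
    (hξ : ∀ i ≤ n, ξ i ω = ξ i ω') : X n ω = X n ω' := by
  induction n with
  | zero => rw [h.zero, h.zero]
  | succ n ih => rw [h.succ, h.succ, ih fun i hi => hξ i (by omega), hξ (n + 1) le_rfl]

lemma odd_X (h : IsChain μ ξ X) (n : ℕ) (ω : Ω) : Odd (X n ω) := by
  cases n with
  | zero => simp [h.zero]
  | succ n =>
    rw [h.succ]
    exact odd_collatzStep (by rcases h.val (n + 1) ω with h | h | h | h <;> omega)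

lemma measurableSet_noReturnUpTo (h : IsChain μ ξ X) (n : ℕ) :
    MeasurableSet (noReturnUpTo X n) := by
  simp only [noReturnUpTo, Set.ofPred_forall]
  exact .iInter fun k => .iInter fun _ => .iInter fun _ =>
    (h.measurable_X k (measurableSet_singleton 1)).compl

lemma measurable_returnTime (h : IsChain μ ξ X) :
    Measurable fun ω => (returnTime X ω : ℝ≥0∞) := by
  simp_rw [returnTime_eq_tsum_indicator]
  exact .tsum fun n => measurable_one.indicator (h.measurableSet_noReturnUpTo n)

lemma setLIntegral_comp_succ_eq (h : IsChain μ ξ X) (n x : ℕ) (g : ℕ → ℝ≥0∞) :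
    ∫⁻ ω in noReturnUpTo X n ∩ X n ⁻¹' {x}, g (X (n + 1) ω) ∂μ =
      μ (noReturnUpTo X n ∩ X n ⁻¹' {x}) * ((∑ j ∈ {1, 3, 5, 7}, g (collatzStep x j)) / 4) := by
  have hB : MeasurableSet (noReturnUpTo X n ∩ X n ⁻¹' {x}) :=
    (h.measurableSet_noReturnUpTo n).inter (h.measurable_X n (measurableSet_singleton x))
  rw [setLIntegral_congr_fun hB (g := fun ω => g (collatzStep x (ξ (n + 1) ω)))
      fun ω hω => by rw [h.succ, hω.2],
    h.indep.setLIntegral_comp_eq_mul h.measurable (S := Finset.range (n + 1)) (k := n + 1) (by simp)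
      _ fun j => g (collatzStep x j),
    h.lintegral_comp_eq (n + 1) fun j => g (collatzStep x j)]
  rintro ω ω' hξ ⟨hret, hx⟩
  have hX {k} (hk : k ≤ n) : X k ω = X k ω' :=
    h.X_eq_of_forall_le fun i hi => hξ i (Finset.mem_range.2 (by omega))
  exact ⟨fun k hk1 hkn => hX hkn ▸ hret k hk1 hkn, (hX le_rfl).symm.trans hx⟩

lemma setLIntegral_lyapunov_succ_add_le (h : IsChain μ ξ X) {n : ℕ} (hn : 1 ≤ n) :
    ∫⁻ ω in noReturnUpTo X (n + 1), lyapunov (X (n + 1) ω) ∂μ + μ (noReturnUpTo X (n + 1)) ≤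
      ∫⁻ ω in noReturnUpTo X n, lyapunov (X n ω) ∂μ := by
  have hA := h.measurableSet_noReturnUpTo
  calc ∫⁻ ω in noReturnUpTo X (n + 1), lyapunov (X (n + 1) ω) ∂μ + μ (noReturnUpTo X (n + 1))
      = ∫⁻ ω in noReturnUpTo X (n + 1), ((lyapunov (X (n + 1) ω) : ℝ≥0∞) + 1) ∂μ := by
        rw [lintegral_add_right _ measurable_const, setLIntegral_one]
    _ ≤ ∫⁻ ω in noReturnUpTo X n, ((lyapunov (X (n + 1) ω) : ℝ≥0∞) + 1) ∂μ :=
        lintegral_mono_set fun ω hω k hk1 hkn => hω k hk1 (by omega)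
    _ = ∑' x, ∫⁻ ω in noReturnUpTo X n ∩ X n ⁻¹' {x}, ((lyapunov (X (n + 1) ω) : ℝ≥0∞) + 1) ∂μ :=
        setLIntegral_eq_tsum_inter_preimage (hA n) (h.measurable_X n) _
    _ ≤ ∑' x, ∫⁻ ω in noReturnUpTo X n ∩ X n ⁻¹' {x}, (lyapunov (X n ω) : ℝ≥0∞) ∂μ := by
        refine ENNReal.tsum_le_tsum fun x => ?_
        have hB : MeasurableSet (noReturnUpTo X n ∩ X n ⁻¹' {x}) :=
          (hA n).inter (h.measurable_X n (measurableSet_singleton x))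
        rw [h.setLIntegral_comp_succ_eq n x fun y => (lyapunov y : ℝ≥0∞) + 1,
          setLIntegral_congr_fun hB (g := fun _ => (lyapunov x : ℝ≥0∞)) fun ω hω => by rw [hω.2],
          setLIntegral_const, mul_comm]
        by_cases hx : Odd x ∧ x ≠ 1
        · gcongr
          rw [ENNReal.div_le_iff (by norm_num) (by norm_num), mul_comm]
          exact_mod_cast lyapunov_drift hx.1 hx.2
        · have : noReturnUpTo X n ∩ X n ⁻¹' {x} = ∅ := by
            refine Set.eq_empty_of_forall_notMem fun ω ⟨hω, hx'⟩ => hx ?_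
            rw [← hx']
            exact ⟨h.odd_X n ω, hω n hn le_rfl⟩
          simp [this]
    _ = ∫⁻ ω in noReturnUpTo X n, lyapunov (X n ω) ∂μ :=
        (setLIntegral_eq_tsum_inter_preimage (hA n) (h.measurable_X n) _).symm

lemma tsum_measure_noReturnUpTo_le (h : IsChain μ ξ X) :
    ∑' n, μ (noReturnUpTo X (n + 2)) ≤ ∫⁻ ω, (lyapunov (X 1 ω) : ℝ≥0∞) ∂μ :=
  (ENNReal.tsum_le_of_succ_add_le
    (a := fun n => ∫⁻ ω in noReturnUpTo X (n + 1), (lyapunov (X (n + 1) ω) : ℝ≥0∞) ∂μ)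
    fun n => h.setLIntegral_lyapunov_succ_add_le (n := n + 1) (by omega)).trans
    (setLIntegral_le_lintegral _ _)

lemma lintegral_lyapunov_one_lt_top (h : IsChain μ ξ X) :
    ∫⁻ ω, (lyapunov (X 1 ω) : ℝ≥0∞) ∂μ < ⊤ := by
  simp_rw [h.succ 0, h.zero]
  rw [h.lintegral_comp_eq 1 fun j => (lyapunov (collatzStep 1 j) : ℝ≥0∞)]
  exact ENNReal.div_lt_top (by simp) (by norm_num)

lemma lintegral_returnTime_lt_top (h : IsChain μ ξ X) [IsProbabilityMeasure μ] :
    ∫⁻ ω, (returnTime X ω : ℝ≥0∞) ∂μ < ⊤ := by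
  have hA := h.measurableSet_noReturnUpTo
  calc ∫⁻ ω, (returnTime X ω : ℝ≥0∞) ∂μ = ∑' n, μ (noReturnUpTo X n) := by
        simp_rw [returnTime_eq_tsum_indicator]
        rw [lintegral_tsum fun n => (measurable_one.indicator (hA n)).aemeasurable]
        simp_rw [lintegral_indicator_one (hA _)]
    _ = μ (noReturnUpTo X 0) + (μ (noReturnUpTo X 1) + ∑' n, μ (noReturnUpTo X (n + 2))) := by
        rw [tsum_eq_zero_add' ENNReal.summable, tsum_eq_zero_add' ENNReal.summable]
    _ ≤ 1 + (1 + ∫⁻ ω, (lyapunov (X 1 ω) : ℝ≥0∞) ∂μ) := by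
        gcongr
        exacts [prob_le_one, prob_le_one, h.tsum_measure_noReturnUpTo_le]
    _ < ⊤ := by
        have := h.lintegral_lyapunov_one_lt_top
        finiteness

end IsChain

end RandomCollatz

/-- (Proposition 2, positive recurrence of state 1) For the randomized Collatz chain
started at `X₀ = 1`, the first return time `T := inf {n ≥ 1 : Xₙ = 1}` satisfies
`E[T] < ∞`; in particular `T < ∞` a.s. -/
theorem stmt_14
    {Ω : Type*} [MeasurableSpace Ω] (μ : MeasureTheory.Measure Ω)
    [MeasureTheory.IsProbabilityMeasure μ]
    (ξ : ℕ → Ω → ℕ)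
    (hξval : ∀ n ω, ξ n ω = 1 ∨ ξ n ω = 3 ∨ ξ n ω = 5 ∨ ξ n ω = 7)
    (hξmeas : ∀ n, Measurable (ξ n))
    (hξindep : ProbabilityTheory.iIndepFun ξ μ)
    (hξdist : ∀ n, μ {ω | ξ n ω = 1} = 1/4 ∧ μ {ω | ξ n ω = 3} = 1/4 ∧
      μ {ω | ξ n ω = 5} = 1/4 ∧ μ {ω | ξ n ω = 7} = 1/4)
    (X : ℕ → Ω → ℕ)
    (hX0 : ∀ ω, X 0 ω = 1)
    (hXrec : ∀ n ω, X (n + 1) ω =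
      (3 * X n ω + ξ (n + 1) ω) / 2 ^ padicValNat 2 (3 * X n ω + ξ (n + 1) ω))
    (T : Ω → ℕ∞)
    (hT : ∀ ω, T ω = ⨅ (n : ℕ) (_ : 1 ≤ n) (_ : X n ω = 1), (n : ℕ∞)) :
    ∫⁻ ω, (T ω : ENNReal) ∂μ < ⊤ ∧ ∀ᵐ ω ∂μ, T ω < ⊤ := by
  obtain rfl : T = RandomCollatz.returnTime X := funext hT
  have h : RandomCollatz.IsChain μ ξ X := ⟨hξval, hξmeas, hξindep, hξdist, hX0, hXrec⟩
  have hfin := h.lintegral_returnTime_lt_top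
  refine ⟨hfin, ?_⟩
  filter_upwards [ae_lt_top h.measurable_returnTime hfin.ne] with ω hω
  exact ENat.toENNReal_lt_top.1 hω
end
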